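/- Let τ = [x_{i−1},x_i]×[y_{j−1},y_j] be an axis-parallel rectangle with side lengths h_x = x_i − x_{i−1}, h_y = y_j − y_{j−1} and center (x_τ, y_τ) = ((x_{i−1}+x_i)/2, (y_{j−1}+y_j)/2). Let g ∈ C³(τ), let g^I be the bilinear interpolant of g on τ (the unique function of the form a + bx + cy + dxy agreeing with g at the four vertices of τ), and let w be any bilinear function on τ. Then ∫_τ (g − g^I)_x w_x dx dy = ∫_τ g_{xyy} J_τ(y) ( w_x − (2/3)(y − y_τ) w_{xy} ) dx dy, where J_τ(y) = ((y − y_τ)² − h_y²/4)/2. -/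

import Mathlib

/-!
Integrating in `x` first, the left side becomes `∫ φ(y) (b + d y) dy`, where
`φ(y) = (g - g^I)(x₁, y) - (g - g^I)(x₀, y)` and `w_x = b + d y`. Since `g^I` interpolates `g`,
`φ` vanishes at `y₀` and `y₁`; since `g^I` is affine in `y`, `φ'' = g_yy(x₁, ·) - g_yy(x₀, ·)`,
which is the `x`-integral of `g_xyy`. The function `u = J_τ (w_x - (2/3)(y - y_τ) w_xy)`, with
`J_τ = bubble y₀ y₁`, also vanishes at `y₀` and `y₁` and satisfies `u'' = b + d y`, so two
integrations by parts give `∫ φ u'' = ∫ φ'' u`, which is the identity after undoing the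
`x`-integration on the right.
-/

open MeasureTheory Real Set

noncomputable section

def pdx (f : ℝ × ℝ → ℝ) : ℝ × ℝ → ℝ := fun p => fderiv ℝ f p (1, 0)

def pdy (f : ℝ × ℝ → ℝ) : ℝ × ℝ → ℝ := fun p => fderiv ℝ f p (0, 1)

def pd (i j : ℕ) (f : ℝ × ℝ → ℝ) : ℝ × ℝ → ℝ := pdx^[i] (pdy^[j] f)

def IsBilinear (f : ℝ × ℝ → ℝ) : Prop :=
  ∃ a b c d : ℝ, ∀ p : ℝ × ℝ, f p = a + b * p.1 + c * p.2 + d * (p.1 * p.2)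

theorem hasDerivAt_pdx {f : ℝ × ℝ → ℝ} {x y : ℝ} (hf : DifferentiableAt ℝ f (x, y)) :
    HasDerivAt (fun t => f (t, y)) (pdx f (x, y)) x :=
  hf.hasFDerivAt.comp_hasDerivAt x ((hasDerivAt_id x).prodMk (hasDerivAt_const x y))

theorem hasDerivAt_pdy {f : ℝ × ℝ → ℝ} {x y : ℝ} (hf : DifferentiableAt ℝ f (x, y)) :
    HasDerivAt (fun t => f (x, t)) (pdy f (x, y)) y :=
  hf.hasFDerivAt.comp_hasDerivAt y ((hasDerivAt_const y x).prodMk (hasDerivAt_id y))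

theorem hasDerivAt_slice_sub {f : ℝ × ℝ → ℝ} (hf : Differentiable ℝ f) (x0 x1 y : ℝ) :
    HasDerivAt (fun t => f (x1, t) - f (x0, t)) (pdy f (x1, y) - pdy f (x0, y)) y :=
  (hasDerivAt_pdy (hf _)).fun_sub (hasDerivAt_pdy (hf _))

theorem ContDiff.pdx {m n : WithTop ℕ∞} {f : ℝ × ℝ → ℝ} (hf : ContDiff ℝ n f) (hmn : m + 1 ≤ n) :
    ContDiff ℝ m (pdx f) :=
  (hf.fderiv_right hmn).clm_apply contDiff_const

theorem ContDiff.pdy {m n : WithTop ℕ∞} {f : ℝ × ℝ → ℝ} (hf : ContDiff ℝ n f) (hmn : m + 1 ≤ n) :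
    ContDiff ℝ m (pdy f) :=
  (hf.fderiv_right hmn).clm_apply contDiff_const

theorem IsBilinear.contDiff {f : ℝ × ℝ → ℝ} (hf : IsBilinear f) {n : WithTop ℕ∞} :
    ContDiff ℝ n f := by
  obtain ⟨a, b, c, d, hf⟩ := hf
  rw [funext hf]
  fun_prop

theorem pdx_bilinear {f : ℝ × ℝ → ℝ} {a b c d : ℝ}
    (hf : ∀ p : ℝ × ℝ, f p = a + b * p.1 + c * p.2 + d * (p.1 * p.2)) (p : ℝ × ℝ) :
    pdx f p = b + d * p.2 := by
  have hd : DifferentiableAt ℝ f p := by rw [funext hf]; fun_prop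
  refine (hasDerivAt_pdx hd).unique ?_
  simp_rw [hf]
  simpa using ((((hasDerivAt_id p.1).const_mul b).const_add a).add_const (c * p.2)).fun_add
    (((hasDerivAt_id p.1).mul_const p.2).const_mul d)

theorem pdy_bilinear {f : ℝ × ℝ → ℝ} {a b c d : ℝ}
    (hf : ∀ p : ℝ × ℝ, f p = a + b * p.1 + c * p.2 + d * (p.1 * p.2)) (p : ℝ × ℝ) :
    pdy f p = c + d * p.1 := by
  have hd : DifferentiableAt ℝ f p := by rw [funext hf]; fun_prop
  refine (hasDerivAt_pdy hd).unique ?_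
  simp_rw [hf]
  simpa using (((hasDerivAt_id p.2).const_mul c).const_add (a + b * p.1)).fun_add
    (((hasDerivAt_id p.2).const_mul p.1).const_mul d)

theorem pd_one_one_bilinear {f : ℝ × ℝ → ℝ} {a b c d : ℝ}
    (hf : ∀ p : ℝ × ℝ, f p = a + b * p.1 + c * p.2 + d * (p.1 * p.2)) (p : ℝ × ℝ) :
    pd 1 1 f p = d := by
  have hfy (q : ℝ × ℝ) : pdy f q = c + d * q.1 + 0 * q.2 + 0 * (q.1 * q.2) := by
    rw [pdy_bilinear hf]; ring
  simpa [pd] using pdx_bilinear hfy p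

theorem integral_pdx_eq_sub {f : ℝ × ℝ → ℝ} (hf : ContDiff ℝ 1 f) (x0 x1 y : ℝ) :
    ∫ x in x0..x1, pdx f (x, y) = f (x1, y) - f (x0, y) :=
  intervalIntegral.integral_eq_sub_of_hasDerivAt
    (fun x _ => hasDerivAt_pdx (hf.differentiable one_ne_zero _))
    (((hf.pdx (m := 0) le_rfl).continuous.comp (by fun_prop)).intervalIntegrable x0 x1)

theorem setIntegral_Icc_prod_Icc {E : Type*} [NormedAddCommGroup E] [NormedSpace ℝ E]
    {f : ℝ × ℝ → E} {x0 x1 y0 y1 : ℝ} (hx : x0 ≤ x1) (hy : y0 ≤ y1)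
    (hf : IntegrableOn f (Icc x0 x1 ×ˢ Icc y0 y1)) :
    ∫ p in Icc x0 x1 ×ˢ Icc y0 y1, f p = ∫ y in y0..y1, ∫ x in x0..x1, f (x, y) := by
  rw [Measure.volume_eq_prod] at hf ⊢
  rw [← setIntegral_prod_swap, ← Function.comp_def f Prod.swap, setIntegral_prod _ hf.swap,
    intervalIntegral.integral_of_le hy, ← integral_Icc_eq_integral_Ioc]
  simp_rw [intervalIntegral.integral_of_le hx, ← integral_Icc_eq_integral_Ioc]
  rfl

theorem setIntegral_pdx_mul_eq {f : ℝ × ℝ → ℝ} {k : ℝ → ℝ} {x0 x1 y0 y1 : ℝ}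
    (hf : ContDiff ℝ 1 f) (hk : Continuous k) (hx : x0 ≤ x1) (hy : y0 ≤ y1) :
    ∫ p in Icc x0 x1 ×ˢ Icc y0 y1, pdx f p * k p.2 =
      ∫ y in y0..y1, (f (x1, y) - f (x0, y)) * k y := by
  have hcont : Continuous fun p : ℝ × ℝ => pdx f p * k p.2 :=
    (hf.pdx (m := 0) le_rfl).continuous.mul (hk.comp continuous_snd)
  rw [setIntegral_Icc_prod_Icc hx hy
    (hcont.continuousOn.integrableOn_compact (isCompact_Icc.prod isCompact_Icc))]
  simp only [intervalIntegral.integral_mul_const, integral_pdx_eq_sub hf]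

theorem integral_mul_deriv2_eq_integral_deriv2_mul {a b : ℝ} {φ φ' φ'' u u' u'' : ℝ → ℝ}
    (hφ : ∀ y ∈ uIcc a b, HasDerivAt φ (φ' y) y) (hφ' : ∀ y ∈ uIcc a b, HasDerivAt φ' (φ'' y) y)
    (hu : ∀ y ∈ uIcc a b, HasDerivAt u (u' y) y) (hu' : ∀ y ∈ uIcc a b, HasDerivAt u' (u'' y) y)
    (hφ'i : IntervalIntegrable φ' volume a b) (hφ''i : IntervalIntegrable φ'' volume a b)
    (hu'i : IntervalIntegrable u' volume a b) (hu''i : IntervalIntegrable u'' volume a b)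
    (hφa : φ a = 0) (hφb : φ b = 0) (hua : u a = 0) (hub : u b = 0) :
    ∫ y in a..b, φ y * u'' y = ∫ y in a..b, φ'' y * u y := by
  have hφu := intervalIntegral.integral_mul_deriv_eq_deriv_mul hφ hu' hφ'i hu''i
  have huφ := intervalIntegral.integral_mul_deriv_eq_deriv_mul hu hφ' hu'i hφ''i
  rw [hφa, hφb] at hφu
  rw [hua, hub] at huφ
  simp only [mul_comm (u' _)] at huφ
  simp only [mul_comm (φ'' _)]
  linarith

def bubble (y0 y1 y : ℝ) : ℝ := ((y - (y0 + y1) / 2) ^ 2 - (y1 - y0) ^ 2 / 4) / 2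

theorem bubble_left (y0 y1 : ℝ) : bubble y0 y1 y0 = 0 := by
  unfold bubble; ring

theorem bubble_right (y0 y1 : ℝ) : bubble y0 y1 y1 = 0 := by
  unfold bubble; ring

theorem hasDerivAt_bubble (y0 y1 y : ℝ) : HasDerivAt (bubble y0 y1) (y - (y0 + y1) / 2) y := by
  have h := ((((hasDerivAt_id y).sub_const ((y0 + y1) / 2)).pow 2).sub_const
    ((y1 - y0) ^ 2 / 4)).div_const 2
  exact h.congr_deriv (by simp)

theorem integral_mul_affine_eq_integral_deriv2_mul_bubble {y0 y1 b d : ℝ} {φ φ' φ'' : ℝ → ℝ}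
    (hφ : ∀ y ∈ uIcc y0 y1, HasDerivAt φ (φ' y) y)
    (hφ' : ∀ y ∈ uIcc y0 y1, HasDerivAt φ' (φ'' y) y)
    (hφ'i : IntervalIntegrable φ' volume y0 y1) (hφ''i : IntervalIntegrable φ'' volume y0 y1)
    (hφ0 : φ y0 = 0) (hφ1 : φ y1 = 0) :
    ∫ y in y0..y1, φ y * (b + d * y) =
      ∫ y in y0..y1, φ'' y * (bubble y0 y1 y * (b + d * y - 2 / 3 * (y - (y0 + y1) / 2) * d)) := by
  set c := (y0 + y1) / 2
  set v : ℝ → ℝ := fun y => b + d * y - 2 / 3 * (y - c) * d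
  have hv (y : ℝ) : HasDerivAt v (d / 3) y := by
    refine ((((hasDerivAt_id y).const_mul d).const_add b).fun_sub
      ((((hasDerivAt_id y).sub_const c).const_mul (2 / 3)).mul_const d)).congr_deriv ?_
    ring
  have hu (y : ℝ) : HasDerivAt (fun y => bubble y0 y1 y * v y)
      ((y - c) * v y + bubble y0 y1 y * (d / 3)) y :=
    (hasDerivAt_bubble y0 y1 y).fun_mul (hv y)
  have hu' (y : ℝ) :
      HasDerivAt (fun y => (y - c) * v y + bubble y0 y1 y * (d / 3)) (b + d * y) y := by
    refine ((((hasDerivAt_id y).sub_const c).fun_mul (hv y)).fun_add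
      ((hasDerivAt_bubble y0 y1 y).mul_const (d / 3))).congr_deriv ?_
    simp only [v, id]
    ring
  exact integral_mul_deriv2_eq_integral_deriv2_mul hφ hφ' (fun y _ => hu y) (fun y _ => hu' y)
    hφ'i hφ''i ((by unfold v bubble; fun_prop : Continuous _).intervalIntegrable _ _)
    ((by fun_prop : Continuous _).intervalIntegrable _ _) hφ0 hφ1
    (by simp [bubble_left]) (by simp [bubble_right])

/-- Lin identity (a): for `g ∈ C³(τ)` with bilinear interpolant `g^I` on the rectangle
`τ = [x₀,x₁]×[y₀,y₁]` and any bilinear `w`,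
`∫_τ (g−g^I)_x w_x = ∫_τ g_{xyy} J_τ(y) (w_x − (2/3)(y−y_τ) w_{xy})`,
where `J_τ(y) = ((y−y_τ)² − h_y²/4)/2`. -/
theorem lin_identity_a (x0 x1 y0 y1 : ℝ) (hx : x0 < x1) (hy : y0 < y1)
    (g gI w : ℝ × ℝ → ℝ) (hg : ContDiff ℝ 3 g)
    (hgIbil : IsBilinear gI)
    (h00 : gI (x0, y0) = g (x0, y0)) (h10 : gI (x1, y0) = g (x1, y0))
    (h01 : gI (x0, y1) = g (x0, y1)) (h11 : gI (x1, y1) = g (x1, y1))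
    (hwbil : IsBilinear w) :
    ∫ p in Icc x0 x1 ×ˢ Icc y0 y1, pdx (fun q => g q - gI q) p * pdx w p
      = ∫ p in Icc x0 x1 ×ˢ Icc y0 y1,
          pd 1 2 g p * (((p.2 - (y0 + y1) / 2) ^ 2 - (y1 - y0) ^ 2 / 4) / 2) *
            (pdx w p - 2 / 3 * (p.2 - (y0 + y1) / 2) * pd 1 1 w p) := by
  have hgIC : ContDiff ℝ 1 gI := hgIbil.contDiff
  obtain ⟨ai, bi, ci, di, hgI⟩ := hgIbil
  obtain ⟨aw, bw, cw, dw, hw⟩ := hwbil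
  have hgy : ContDiff ℝ 2 (pdy g) := hg.pdy (by norm_num)
  have hgyy : ContDiff ℝ 1 (pdy (pdy g)) := hgy.pdy (by norm_num)
  set φ : ℝ → ℝ := fun y => g (x1, y) - g (x0, y) - (x1 - x0) * (bi + di * y)
  set φ' : ℝ → ℝ := fun y => pdy g (x1, y) - pdy g (x0, y) - (x1 - x0) * di
  set φ'' : ℝ → ℝ := fun y => pdy (pdy g) (x1, y) - pdy (pdy g) (x0, y)
  have hφ (y : ℝ) : HasDerivAt φ (φ' y) y :=
    (hasDerivAt_slice_sub (hg.differentiable (by norm_num)) x0 x1 y).fun_sub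
      (((((hasDerivAt_id y).const_mul di).const_add bi).const_mul (x1 - x0)).congr_deriv
        (by simp))
  have hφ' (y : ℝ) : HasDerivAt φ' (φ'' y) y :=
    (hasDerivAt_slice_sub (hgy.differentiable (by norm_num)) x0 x1 y).sub_const _
  simp only [pdx_bilinear hw, pd_one_one_bilinear hw]
  calc _ = ∫ y in y0..y1, φ y * (bw + dw * y) := by
        refine (setIntegral_pdx_mul_eq ((hg.of_le (by norm_num)).sub hgIC)
          (by fun_prop : Continuous fun y => bw + dw * y) hx.le hy.le).trans
          (intervalIntegral.integral_congr fun y _ => ?_)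
        simp only [hgI, φ]
        ring
    _ = ∫ y in y0..y1,
          φ'' y * (bubble y0 y1 y * (bw + dw * y - 2 / 3 * (y - (y0 + y1) / 2) * dw)) :=
        integral_mul_affine_eq_integral_deriv2_mul_bubble (fun y _ => hφ y) (fun y _ => hφ' y)
          ((by fun_prop : Continuous φ').intervalIntegrable _ _)
          ((by fun_prop : Continuous φ'').intervalIntegrable _ _)
          (by simp only [φ, ← h00, ← h10, hgI]; ring) (by simp only [φ, ← h01, ← h11, hgI]; ring)
    _ = _ := by
        refine (setIntegral_pdx_mul_eq hgyy (by unfold bubble; fun_prop :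
          Continuous fun y => bubble y0 y1 y * (bw + dw * y - 2 / 3 * (y - (y0 + y1) / 2) * dw))
          hx.le hy.le).symm.trans ?_
        simp only [mul_assoc]
        rfl
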